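/- arXiv:2308.14054 — 2 statements merged into one kernel-verified Lean document; each statement's English description precedes it below -/
import Mathlib

section
/- Let G = (V,E) be a finite simple graph and a ∈ V. Then there exist complex numbers c_+ and c_− of modulus 1 such that P_{Y,±}^{(a)} |G⟩ = (c_±/√2) |Y,±⟩^{(a)} ⊗ U_{a,Y,±} |τ_a(G) − a⟩, where U_{a,Y,+} = ⨂_{b∈N_a} √(−iZ)^{(b)}, U_{a,Y,−} = ⨂_{b∈N_a} √(+iZ)^{(b)}, and |τ_a(G) − a⟩ is the graph state of the graph obtained from G by local complementation at a followed by deletion of a. -/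
open scoped BigOperators

noncomputable section

/-- The state space of a collection of qubits indexed by `V`:
amplitudes on computational-basis configurations `V → Bool`. -/
abbrev QState (V : Type*) := (V → Bool) → ℂ

variable {V : Type*}

/-- The inner product `⟨ψ|φ⟩`. -/
def qInner [Fintype V] [DecidableEq V] (ψ φ : QState V) : ℂ :=
  ∑ x, starRingEnd ℂ (ψ x) * φ x

/-- Pauli `X` acting on qubit `a`. -/
def pauliX [DecidableEq V] (a : V) (ψ : QState V) : QState V :=
  fun x => ψ (Function.update x a (!x a))

/-- Pauli `Z` acting on qubit `a`. -/
def pauliZ (a : V) (ψ : QState V) : QState V :=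
  fun x => (if x a then (-1 : ℂ) else 1) * ψ x

/-- Pauli `Y` acting on qubit `a`. -/
def pauliY [DecidableEq V] (a : V) (ψ : QState V) : QState V :=
  fun x => (if x a then Complex.I else -Complex.I) * ψ (Function.update x a (!x a))

/-- The tensor product `⨂_{b ∈ s} Z^{(b)}` of Pauli `Z` over the qubits in `s`. -/
def pauliZProd (s : Finset V) (ψ : QState V) : QState V :=
  fun x => (∏ b ∈ s, if x b then (-1 : ℂ) else 1) * ψ x

/-- A tensor product over the qubits in `s` of the diagonal single-qubit gate
`diag (f false, f true)`. -/
def diagProd (s : Finset V) (f : Bool → ℂ) (ψ : QState V) : QState V :=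
  fun x => (∏ b ∈ s, f (x b)) * ψ x

/-- The sign `(-1)^{x u · x v}` contributed by an edge `{u, v}`. -/
def edgeSign (x : V → Bool) : Sym2 V → ℂ :=
  Sym2.lift ⟨fun a b => if x a && x b then (-1 : ℂ) else 1,
    fun a b => by simp [Bool.and_comm]⟩

/-- The graph state `|G⟩ = (∏_{{u,v}∈E} CZ^{(uv)}) ⨂_v |+⟩^{(v)}` of a finite simple graph,
written out in amplitudes. -/
def graphState [Fintype V] [DecidableEq V] (G : SimpleGraph V) [DecidableRel G.Adj] :
    QState V :=
  fun x => ((Real.sqrt 2 : ℝ) : ℂ)⁻¹ ^ (Fintype.card V) * ∏ e ∈ G.edgeFinset, edgeSign x e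

/-- Local complementation `τ_a(G)` of a graph `G` at the vertex `a`: complement the
adjacency among the neighbors of `a`, leaving all other adjacencies unchanged. -/
def localComp (G : SimpleGraph V) (a : V) : SimpleGraph V where
  Adj u v :=
    (G.Adj a u ∧ G.Adj a v ∧ u ≠ v ∧ ¬ G.Adj u v) ∨
      ((¬ (G.Adj a u ∧ G.Adj a v)) ∧ G.Adj u v)
  symm := by
    constructor
    intro u v h
    rcases h with ⟨h1, h2, h3, h4⟩ | ⟨h1, h2⟩
    · exact Or.inl ⟨h2, h1, h3.symm, fun h => h4 (G.adj_symm h)⟩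
    · exact Or.inr ⟨fun h => h1 ⟨h.2, h.1⟩, G.adj_symm h2⟩
  loopless := by
    constructor
    intro u h
    rcases h with ⟨_, _, h3, _⟩ | ⟨_, h2⟩
    · exact h3 rfl
    · exact G.irrefl h2

instance [DecidableEq V] (G : SimpleGraph V) [DecidableRel G.Adj] (a : V) :
    DecidableRel (localComp G a).Adj := fun u v =>
  inferInstanceAs (Decidable
    ((G.Adj a u ∧ G.Adj a v ∧ u ≠ v ∧ ¬ G.Adj u v) ∨
      ((¬ (G.Adj a u ∧ G.Adj a v)) ∧ G.Adj u v)))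

/-- The induced subgraph of `G` on the vertices satisfying `P`. -/
def inducedSub (G : SimpleGraph V) (P : V → Prop) : SimpleGraph {v : V // P v} :=
  SimpleGraph.comap Subtype.val G

instance (G : SimpleGraph V) [DecidableRel G.Adj] (P : V → Prop) :
    DecidableRel (inducedSub G P).Adj := fun u v =>
  inferInstanceAs (Decidable (G.Adj u.1 v.1))

/-- The eigenvectors `|Z,+⟩ = |0⟩`, `|Z,-⟩ = |1⟩` of Pauli `Z`
(`s = false` the `+1`-eigenvector, `s = true` the `-1`-eigenvector). -/
def zVec (s : Bool) : Bool → ℂ := fun c => if c = s then 1 else 0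

/-- The eigenvectors `|X,±⟩ = (|0⟩ ± |1⟩)/√2` of Pauli `X`
(`s = false` the `+1`-eigenvector, `s = true` the `-1`-eigenvector). -/
def xVec (s : Bool) : Bool → ℂ :=
  fun c => ((Real.sqrt 2 : ℝ) : ℂ)⁻¹ * (if c && s then -1 else 1)

/-- The eigenvectors `|Y,±⟩ = (|0⟩ ± i|1⟩)/√2` of Pauli `Y`
(`s = false` the `+1`-eigenvector, `s = true` the `-1`-eigenvector). -/
def yVec (s : Bool) : Bool → ℂ :=
  fun c => ((Real.sqrt 2 : ℝ) : ℂ)⁻¹ *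
    (if c then (if s then -Complex.I else Complex.I) else 1)

/-- The rank-one projector `|v⟩⟨v|` on qubit `a` (identity elsewhere),
for a single-qubit vector `v`. -/
def projDir [DecidableEq V] (a : V) (v : Bool → ℂ) (ψ : QState V) : QState V :=
  fun x => v (x a) *
    (starRingEnd ℂ (v false) * ψ (Function.update x a false) +
      starRingEnd ℂ (v true) * ψ (Function.update x a true))

/-- The tensor product `|v⟩^{(a)} ⊗ |φ⟩` of a single-qubit state on qubit `a` with a state
on the remaining qubits. -/
def tensorQubit [DecidableEq V] (a : V) (v : Bool → ℂ) (φ : QState {u : V // u ≠ a}) :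
    QState V :=
  fun x => v (x a) * φ (fun u => x u.1)

/-- Apply a single-qubit gate with matrix entries `m r c = ⟨r|M|c⟩` on qubit `a`. -/
def applyGate [DecidableEq V] (a : V) (m : Bool → Bool → ℂ) (ψ : QState V) : QState V :=
  fun x => m (x a) false * ψ (Function.update x a false) +
    m (x a) true * ψ (Function.update x a true)

/-- The square roots `√(±iY) = (I ± iY)/√2`
(`s = false` for `√(+iY)`, `s = true` for `√(-iY)`). -/
def sqrtiY (s : Bool) : Bool → Bool → ℂ :=
  fun r c => ((Real.sqrt 2 : ℝ) : ℂ)⁻¹ *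
    (if s then (if r = false ∧ c = true then -1 else 1)
     else (if r = true ∧ c = false then -1 else 1))

/-- The Hadamard gate. -/
def hadamard : Bool → Bool → ℂ :=
  fun r c => ((Real.sqrt 2 : ℝ) : ℂ)⁻¹ * (if r && c then -1 else 1)

/-- Apply a tensor product of single-qubit gates, one on each qubit. -/
def applyLocal [Fintype V] [DecidableEq V] (u : V → Bool → Bool → ℂ) (ψ : QState V) :
    QState V :=
  fun x => ∑ y : V → Bool, (∏ v, u v (x v) (y v)) * ψ y

/-- `2×2` matrix multiplication (matrices as `Bool → Bool → ℂ`). -/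
def matMul2 (a b : Bool → Bool → ℂ) : Bool → Bool → ℂ :=
  fun r c => ∑ k : Bool, a r k * b k c

/-- Adjoint of a `2×2` matrix. -/
def matAdj2 (a : Bool → Bool → ℂ) : Bool → Bool → ℂ := fun r c => starRingEnd ℂ (a c r)

def idMat : Bool → Bool → ℂ := fun r c => if r = c then 1 else 0
def xMat : Bool → Bool → ℂ := fun r c => if r = c then 0 else 1
def yMat : Bool → Bool → ℂ := fun r c => if r = c then 0 else if r then Complex.I else -Complex.I
def zMat : Bool → Bool → ℂ := fun r c => if r = c then (if r then -1 else 1) else 0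

/-- A `2×2` matrix is unitary. -/
def IsUnitary2 (u : Bool → Bool → ℂ) : Prop := matMul2 (matAdj2 u) u = idMat

/-- A single-qubit Clifford unitary: a unitary conjugating `X` and `Z` into
`i^k·P` with `P` a Pauli matrix. -/
def IsClifford1 (u : Bool → Bool → ℂ) : Prop :=
  IsUnitary2 u ∧
    (∃ (k : ℕ) (P : Bool → Bool → ℂ), P ∈ ({idMat, xMat, yMat, zMat} : Set _) ∧
      matMul2 (matMul2 u xMat) (matAdj2 u) = Complex.I ^ k • P) ∧
    (∃ (k : ℕ) (P : Bool → Bool → ℂ), P ∈ ({idMat, xMat, yMat, zMat} : Set _) ∧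
      matMul2 (matMul2 u zMat) (matAdj2 u) = Complex.I ^ k • P)

/-- The action of the `n`-qubit Pauli operator `c · ⨂_v X^{xv v} Z^{zv v}`. -/
def pauliAction [Fintype V] (c : ℂ) (xv zv : V → Bool) (ψ : QState V) : QState V :=
  fun s => c * (∏ v, if zv v && (xor (s v) (xv v)) then (-1 : ℂ) else 1) *
    ψ (fun v => xor (s v) (xv v))

/-- The outer product `|ψ⟩⟨φ|` as a matrix on configurations. -/
def outer (ψ φ : QState V) : (V → Bool) → (V → Bool) → ℂ :=
  fun x y => ψ x * starRingEnd ℂ (φ y)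

open Classical in
/-- Partial trace keeping the qubits that satisfy `P` (tracing out the others). -/
def ptraceKeep [Fintype V] [DecidableEq V] (P : V → Prop)
    (ρ : (V → Bool) → (V → Bool) → ℂ) :
    ({v : V // P v} → Bool) → ({v : V // P v} → Bool) → ℂ :=
  fun x y => ∑ z : {v : V // ¬ P v} → Bool,
    ρ (fun w => if h : P w then x ⟨w, h⟩ else z ⟨w, h⟩)
      (fun w => if h : P w then y ⟨w, h⟩ else z ⟨w, h⟩)

open Classical in
/-- Apply a product of single-qubit bras `⟨bra v|` to each qubit `v` satisfying `P`,
leaving a state on the remaining qubits. -/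
def applyBras [Fintype V] [DecidableEq V] (P : V → Prop) (bra : V → Bool → ℂ)
    (ψ : QState V) : QState {v : V // ¬ P v} :=
  fun x => ∑ z : {v : V // P v} → Bool,
    (∏ v : {v : V // P v}, bra v.1 (z v)) *
      ψ (fun w => if h : P w then z ⟨w, h⟩ else x ⟨w, h⟩)

/-- A density operator: hermitian, trace one, positive semidefinite. -/
def IsDensityOp {α : Type*} [Fintype α] [DecidableEq α]
    (ρ : (α → Bool) → (α → Bool) → ℂ) : Prop :=
  (∀ x y, starRingEnd ℂ (ρ y x) = ρ x y) ∧ (∑ x, ρ x x = 1) ∧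
    ∀ ψ : (α → Bool) → ℂ, ∃ r : ℝ, 0 ≤ r ∧
      (∑ x, ∑ y, starRingEnd ℂ (ψ x) * ρ x y * ψ y) = (r : ℂ)

open Classical in
/-- Separability of an operator on the qubits indexed by `α` with respect to the
bipartition `(A, Aᶜ)`: a finite convex combination of tensor products of density
operators. -/
def SeparableWrt {α : Type*} [Fintype α] [DecidableEq α] (A : Set α)
    (ρ : (α → Bool) → (α → Bool) → ℂ) : Prop :=
  ∃ (k : ℕ) (p : Fin k → ℝ)
    (σ : Fin k → ({a : α // a ∈ A} → Bool) → ({a : α // a ∈ A} → Bool) → ℂ)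
    (τ : Fin k → ({a : α // a ∉ A} → Bool) → ({a : α // a ∉ A} → Bool) → ℂ),
    (∀ i, 0 ≤ p i) ∧ (∑ i, p i = 1) ∧
    (∀ i, IsDensityOp (σ i)) ∧ (∀ i, IsDensityOp (τ i)) ∧
    ∀ x y, ρ x y = ∑ i, (p i : ℂ) *
      (σ i (fun a => x a.1) (fun a => y a.1) * τ i (fun a => x a.1) (fun a => y a.1))


instance {α : Type*} [DecidableEq α] (r : α → α → Prop) [DecidableRel r] :
    DecidableRel (SimpleGraph.fromRel r).Adj := fun a b =>
  inferInstanceAs (Decidable (a ≠ b ∧ (r a b ∨ r b a)))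

/-- The line graph on `{1, …, n}` (as `Fin n`) with edges between consecutive vertices. -/
def lineGraph (n : ℕ) : SimpleGraph (Fin n) :=
  SimpleGraph.fromRel (fun i j => (i : ℕ) + 1 = (j : ℕ))

instance (n : ℕ) : DecidableRel (lineGraph n).Adj := fun a b =>
  inferInstanceAs (Decidable (a ≠ b ∧ ((a : ℕ) + 1 = (b : ℕ) ∨ (b : ℕ) + 1 = (a : ℕ))))

/-- The extension `I_R ⊗ s` of an operator `s` on `n` qubits by the identity on an extra
reference qubit labelled `0`. -/
def liftOp {n : ℕ} (s : QState (Fin n) → QState (Fin n)) (ψ : QState (Fin (n + 1))) :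
    QState (Fin (n + 1)) :=
  fun x => s (fun y => ψ (Fin.cons (x 0) y)) (fun k => x k.succ)

end

/-! At a configuration `x`, `|G⟩` has amplitude `2^{-n/2} (-1)^{e(x)}`, where `e(x)` is the number
of edges whose ends both carry `1`. The amplitudes at `x_a = 0` and `x_a = 1` differ by `(-1)^k`,
`k` the number of neighbours of `a` carrying `1`, so projecting qubit `a` onto `|Y,±⟩` produces the
factor `(1 ∓ i (-1)^k) / 2`. The edge set of `τ_a(G)` is that of `G` changed by the clique on
`N_a`, which contributes `(-1)^{k choose 2}`. The identity
`(-1)^{k choose 2} (1 + ζ (-1)^k) = (1 + ζ) (-ζ)^k` for `ζ² = -1` matches the two: `(-ζ)^k = μ^{2k}`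
is, up to the global phase `μ^{|N_a|}`, the product of `μ` over the neighbours carrying `1` and
`μ⁻¹` over the others, with `μ = e^{±iπ/4}`. -/

open Finset Complex

local notation "√½" => ((Real.sqrt 2 : ℝ) : ℂ)⁻¹

section

variable {α M : Type*} [DecidableEq α] [CommMonoid M]

theorem Finset.prod_symmDiff_of_mul_self {f : α → M} (hf : ∀ i, f i * f i = 1) (s t : Finset α) :
    ∏ i ∈ symmDiff s t, f i = (∏ i ∈ s, f i) * ∏ i ∈ t, f i := by
  have hsq : (∏ i ∈ s ∩ t, f i) * ∏ i ∈ s ∩ t, f i = 1 := by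
    rw [← prod_mul_distrib]; exact prod_eq_one fun i _ => hf i
  rw [symmDiff_def, sup_eq_union, prod_union disjoint_sdiff_sdiff,
    ← prod_inter_mul_prod_sdiff s t, ← prod_inter_mul_prod_sdiff t s, inter_comm t s]
  calc _ = ((∏ i ∈ s ∩ t, f i) * ∏ i ∈ s ∩ t, f i) * ((∏ i ∈ s \ t, f i) * ∏ i ∈ t \ s, f i) := by
        rw [hsq, one_mul]
    _ = _ := by ac_rfl

theorem Sym2.mk_mem_image_offDiag_iff {s : Finset α} {u v : α} :
    s(u, v) ∈ s.offDiag.image Sym2.mk.uncurry ↔ u ∈ s ∧ v ∈ s ∧ u ≠ v := by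
  simp only [mem_image, mem_offDiag, Prod.exists, Function.uncurry_apply_pair, Sym2.eq_iff]
  constructor
  · rintro ⟨a, b, ⟨ha, hb, hab⟩, ⟨rfl, rfl⟩ | ⟨rfl, rfl⟩⟩
    · exact ⟨ha, hb, hab⟩
    · exact ⟨hb, ha, hab.symm⟩
  · intro h
    exact ⟨u, v, h, Or.inl ⟨rfl, rfl⟩⟩

end

section

variable {V : Type*}

theorem edgeSign_mk (x : V → Bool) (u v : V) :
    edgeSign x s(u, v) = if x u && x v then -1 else 1 := rfl

theorem edgeSign_mul_self (x : V → Bool) (e : Sym2 V) : edgeSign x e * edgeSign x e = 1 := by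
  induction e using Sym2.ind with
  | _ u v => rw [edgeSign_mk]; split <;> norm_num

theorem edgeSign_map {W : Type*} (f : W → V) (x : V → Bool) (e : Sym2 W) :
    edgeSign x (e.map f) = edgeSign (x ∘ f) e := by
  induction e using Sym2.ind with
  | _ u v => rfl

theorem edgeSign_update_of_notMem [DecidableEq V] (x : V → Bool) {a : V} (c : Bool) {e : Sym2 V}
    (h : a ∉ e) : edgeSign (Function.update x a c) e = edgeSign x e := by
  induction e using Sym2.ind with
  | _ u v =>
    rw [Sym2.mem_iff, not_or] at h
    rw [edgeSign_mk, edgeSign_mk, Function.update_of_ne (Ne.symm h.1),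
      Function.update_of_ne (Ne.symm h.2)]

theorem prod_edgeSign_image_offDiag [DecidableEq V] (x : V → Bool) (s : Finset V) :
    ∏ e ∈ s.offDiag.image Sym2.mk.uncurry, edgeSign x e = (-1) ^ (#(s.filter (x ·))).choose 2 := by
  set T := (s.filter (x ·)).offDiag.image Sym2.mk.uncurry
  have hT : ∀ e ∈ s.offDiag.image Sym2.mk.uncurry, edgeSign x e = if e ∈ T then -1 else 1 := by
    intro e he
    induction e using Sym2.ind with
    | _ u v =>
      obtain ⟨hu, hv, huv⟩ := Sym2.mk_mem_image_offDiag_iff.mp he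
      have hmem : s(u, v) ∈ T ↔ x u ∧ x v := by
        rw [Sym2.mk_mem_image_offDiag_iff, mem_filter, mem_filter]
        tauto
      simp [edgeSign_mk, hmem]
  rw [prod_congr rfl hT, prod_ite_mem,
    inter_eq_right.mpr (image_subset_image (offDiag_mono (filter_subset _ s))),
    prod_const, Sym2.card_image_offDiag]

variable [Fintype V] [DecidableEq V]

theorem card_subtype_ne_add_one (a : V) : Fintype.card {v // v ≠ a} + 1 = Fintype.card V := by
  rw [Fintype.card_subtype_compl, Fintype.card_subtype_eq]
  have := Fintype.card_pos_iff.mpr ⟨a⟩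
  omega

theorem map_edgeFinset_inducedSub (H : SimpleGraph V) [DecidableRel H.Adj] (P : V → Prop)
    [DecidablePred P] :
    (inducedSub H P).edgeFinset.map (Function.Embedding.subtype P).sym2Map =
      H.edgeFinset.filter (∀ v ∈ ·, P v) := by
  ext e
  induction e using Sym2.ind with
  | _ u v =>
    simp only [mem_map, mem_filter, SimpleGraph.mem_edgeFinset, SimpleGraph.mem_edgeSet,
      Sym2.exists, Function.Embedding.sym2Map_apply, Function.Embedding.subtype_apply,
      Sym2.map_mk, Sym2.eq_iff, Sym2.mem_iff]
    constructor
    · rintro ⟨p, q, h, ⟨rfl, rfl⟩ | ⟨rfl, rfl⟩⟩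
      · exact ⟨h, by rintro w (rfl | rfl) <;> simp [p.2, q.2]⟩
      · exact ⟨h.symm, by rintro w (rfl | rfl) <;> simp [p.2, q.2]⟩
    · rintro ⟨h, hP⟩
      exact ⟨⟨u, hP u (Or.inl rfl)⟩, ⟨v, hP v (Or.inr rfl)⟩, h, Or.inl ⟨rfl, rfl⟩⟩

variable (G : SimpleGraph V) [DecidableRel G.Adj]

theorem prod_filter_adj_subtype_ne {M : Type*} [CommMonoid M] (a : V) (f : Bool → M)
    (x : V → Bool) :
    ∏ b ∈ univ.filter (fun b : {v // v ≠ a} => G.Adj a b), f (x b) =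
      f true ^ #((G.neighborFinset a).filter (x ·)) *
        f false ^ #((G.neighborFinset a).filter (fun b => ¬ x b)) := by
  have hN : (univ.filter fun b : {v // v ≠ a} => G.Adj a b).map (Function.Embedding.subtype _) =
      G.neighborFinset a := by
    ext v
    simpa using fun h : G.Adj a v => h.ne'
  have hf (c : Bool) : f c = if c then f true else f false := by cases c <;> rfl
  have hmap := prod_map (univ.filter fun b : {v // v ≠ a} => G.Adj a b)
    (Function.Embedding.subtype _) (fun b => f (x b))
  rw [hN] at hmap
  refine hmap.symm.trans ?_
  rw [prod_congr rfl fun b _ => hf (x b), prod_ite, prod_const, prod_const]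

theorem edgeFinset_localComp (a : V) :
    (localComp G a).edgeFinset =
      symmDiff G.edgeFinset ((G.neighborFinset a).offDiag.image Sym2.mk.uncurry) := by
  ext e
  induction e using Sym2.ind with
  | _ u v =>
    rw [mem_symmDiff, Sym2.mk_mem_image_offDiag_iff, SimpleGraph.mem_edgeFinset,
      SimpleGraph.mem_edgeFinset, SimpleGraph.mem_edgeSet, SimpleGraph.mem_edgeSet,
      SimpleGraph.mem_neighborFinset, SimpleGraph.mem_neighborFinset]
    have := G.ne_of_adj (a := u) (b := v)
    show (_ ∨ _) ↔ _
    tauto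

theorem filter_mem_edgeFinset_eq_image (a : V) :
    G.edgeFinset.filter (a ∈ ·) = (G.neighborFinset a).image (s(a, ·)) := by
  ext e
  induction e using Sym2.ind with
  | _ u v =>
    simp only [mem_filter, SimpleGraph.mem_edgeFinset, SimpleGraph.mem_edgeSet, mem_image,
      SimpleGraph.mem_neighborFinset, Sym2.mem_iff, Sym2.eq_iff]
    constructor
    · rintro ⟨h, rfl | rfl⟩
      · exact ⟨v, h, Or.inl ⟨rfl, rfl⟩⟩
      · exact ⟨u, h.symm, Or.inr ⟨rfl, rfl⟩⟩
    · rintro ⟨b, h, ⟨rfl, rfl⟩ | ⟨rfl, rfl⟩⟩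
      · exact ⟨h, Or.inl rfl⟩
      · exact ⟨h.symm, Or.inr rfl⟩

theorem prod_edgeFinset_eq_prod_neighborFinset_mul {M : Type*} [CommMonoid M] (a : V)
    (f : Sym2 V → M) :
    ∏ e ∈ G.edgeFinset, f e =
      (∏ b ∈ G.neighborFinset a, f s(a, b)) * ∏ e ∈ G.edgeFinset.filter (a ∉ ·), f e := by
  rw [← prod_filter_mul_prod_filter_not G.edgeFinset (a ∈ ·), filter_mem_edgeFinset_eq_image,
    prod_image fun _ _ _ _ h => Sym2.congr_right.mp h]

def edgeSignProd (x : V → Bool) : ℂ := ∏ e ∈ G.edgeFinset, edgeSign x e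

theorem graphState_apply (x : V → Bool) :
    graphState G x = √½ ^ Fintype.card V * edgeSignProd G x := rfl

theorem edgeSignProd_localComp (a : V) (x : V → Bool) :
    edgeSignProd (localComp G a) x =
      (-1) ^ (#((G.neighborFinset a).filter (x ·))).choose 2 * edgeSignProd G x := by
  rw [edgeSignProd, edgeFinset_localComp, prod_symmDiff_of_mul_self (edgeSign_mul_self x),
    prod_edgeSign_image_offDiag, mul_comm]
  rfl

theorem edgeSignProd_update (a : V) (x : V → Bool) (c : Bool) :
    edgeSignProd G (Function.update x a c) =
      (-1) ^ #((G.neighborFinset a).filter (fun b => c && x b)) *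
        ∏ e ∈ G.edgeFinset.filter (a ∉ ·), edgeSign x e := by
  have hN : ∀ b ∈ G.neighborFinset a, edgeSign (Function.update x a c) s(a, b) =
      if c && x b then -1 else 1 := fun b hb => by
    rw [edgeSign_mk, Function.update_self,
      Function.update_of_ne ((G.mem_neighborFinset a b).mp hb).ne']
  rw [edgeSignProd, prod_edgeFinset_eq_prod_neighborFinset_mul G a, prod_congr rfl hN,
    prod_ite, prod_const, prod_const_one, mul_one,
    prod_congr rfl fun e he => edgeSign_update_of_notMem x c (mem_filter.mp he).2]

theorem edgeSignProd_inducedSub_ne (a : V) (x : V → Bool) :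
    edgeSignProd (inducedSub G (· ≠ a)) (fun u => x u) =
      edgeSignProd G (Function.update x a false) := by
  have hfilter : G.edgeFinset.filter (a ∉ ·) = G.edgeFinset.filter (∀ v ∈ ·, v ≠ a) :=
    filter_congr fun e _ => ⟨fun h v hv hva => h (hva ▸ hv), fun h ha => h a ha rfl⟩
  rw [edgeSignProd_update, hfilter, ← map_edgeFinset_inducedSub, prod_map]
  simp only [Function.Embedding.sym2Map_apply, edgeSign_map, Bool.false_and, Bool.false_eq_true,
    filter_false, card_empty, pow_zero, one_mul]
  rfl

theorem edgeSignProd_inducedSub_localComp (a : V) (x : V → Bool) :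
    edgeSignProd (inducedSub (localComp G a) (· ≠ a)) (fun u => x u) =
      (-1) ^ (#((G.neighborFinset a).filter (x ·))).choose 2 *
        ∏ e ∈ G.edgeFinset.filter (a ∉ ·), edgeSign x e := by
  have hN : (G.neighborFinset a).filter (Function.update x a false ·) =
      (G.neighborFinset a).filter (x ·) :=
    filter_congr fun b hb => by
      rw [Function.update_of_ne ((G.mem_neighborFinset a b).mp hb).ne']
  rw [edgeSignProd_inducedSub_ne, edgeSignProd_localComp, hN, edgeSignProd_update]
  simp

theorem neg_one_pow_choose_two_mul {ζ : ℂ} (hζ : ζ ^ 2 = -1) (k : ℕ) :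
    (-1) ^ k.choose 2 * (1 + ζ * (-1) ^ k) = (1 + ζ) * (-ζ) ^ k := by
  induction k with
  | zero => simp
  | succ k ih =>
    have he : ((-1 : ℂ) ^ k) ^ 2 = 1 := by rw [← pow_mul, pow_mul', neg_one_sq, one_pow]
    rw [Nat.choose_succ_succ', Nat.choose_one_right, pow_add, pow_succ, pow_succ]
    linear_combination (-ζ) * ih - (-1) ^ k.choose 2 * ζ * he + (-1) ^ k.choose 2 * (-1) ^ k * hζ

/-- `⟨Y,s| = (⟨0| + yBraPhase s ⟨1|) / √2`. -/
def yBraPhase (s : Bool) : ℂ := if s then I else -I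

theorem yBraPhase_sq (s : Bool) : yBraPhase s ^ 2 = -1 := by
  cases s <;> simp [yBraPhase]

theorem norm_yBraPhase (s : Bool) : ‖yBraPhase s‖ = 1 := by
  cases s <;> simp [yBraPhase]

theorem norm_one_add_yBraPhase (s : Bool) : ‖1 + yBraPhase s‖ = Real.sqrt 2 := by
  have h (t : ℝ) (ht : t ^ 2 = 1) : ‖1 + t * I‖ = Real.sqrt 2 := by
    rw [← ofReal_one, norm_add_mul_I, ht]; norm_num
  cases s
  · simpa [yBraPhase] using h (-1) (by norm_num)
  · simpa [yBraPhase] using h 1 (by norm_num)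

theorem conj_yVec_false (s : Bool) : starRingEnd ℂ (yVec s false) = √½ := by
  simp [yVec, Complex.conj_ofReal]

theorem conj_yVec_true (s : Bool) : starRingEnd ℂ (yVec s true) = √½ * yBraPhase s := by
  cases s <;> simp [yVec, yBraPhase, Complex.conj_ofReal]

theorem exp_I_pi_div_four_sq : exp (I * Real.pi / 4) ^ 2 = I := by
  rw [← exp_nat_mul]
  convert exp_pi_div_two_mul_I using 2
  push_cast
  ring

theorem projDir_yVec_graphState (a : V) (s : Bool) (f : Bool → ℂ) (hf : f true * f false = 1)
    (hsq : f true ^ 2 = -yBraPhase s) :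
    projDir a (yVec s) (graphState G) =
      (√½ * (1 + yBraPhase s) * f true ^ #(G.neighborFinset a) * √½) •
        tensorQubit a (yVec s)
          (diagProd (univ.filter fun b : {v // v ≠ a} => G.Adj a b) f
            (graphState (inducedSub (localComp G a) (· ≠ a)))) := by
  funext x
  set k := #((G.neighborFinset a).filter (x ·))
  set m := #((G.neighborFinset a).filter (fun b => ¬ x b))
  set R := ∏ e ∈ G.edgeFinset.filter (a ∉ ·), edgeSign x e
  set n := Fintype.card {v // v ≠ a}
  have hd : #(G.neighborFinset a) = k + m := (card_filter_add_card_filter_not _).symm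
  have h0 : graphState G (Function.update x a false) = √½ ^ (n + 1) * R := by
    rw [graphState_apply, edgeSignProd_update, card_subtype_ne_add_one]
    simp [R]
  have h1 : graphState G (Function.update x a true) = √½ ^ (n + 1) * ((-1) ^ k * R) := by
    rw [graphState_apply, edgeSignProd_update, card_subtype_ne_add_one]
    simp [k, R]
  have hτ : graphState (inducedSub (localComp G a) (· ≠ a)) (fun u => x u) =
      √½ ^ n * ((-1) ^ k.choose 2 * R) := by
    rw [graphState_apply, edgeSignProd_inducedSub_localComp]
  have hphase := neg_one_pow_choose_two_mul (yBraPhase_sq s) k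
  have hC : ((-1 : ℂ) ^ k.choose 2) ^ 2 = 1 := by rw [← pow_mul, pow_mul', neg_one_sq, one_pow]
  simp only [projDir, tensorQubit, diagProd, Pi.smul_apply, smul_eq_mul, conj_yVec_false,
    conj_yVec_true, h0, h1, hτ, prod_filter_adj_subtype_ne, hd]
  have hμ : f true ^ (k + m) * (f true ^ k * f false ^ m) = (-yBraPhase s) ^ k := by
    calc f true ^ (k + m) * (f true ^ k * f false ^ m)
        = (f true ^ 2) ^ k * (f true * f false) ^ m := by ring
      _ = (-yBraPhase s) ^ k := by rw [hsq, hf, one_pow, mul_one]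
  linear_combination
    (-(√½ ^ (n + 2) * (1 + yBraPhase s) * yVec s (x a) * (-1) ^ k.choose 2 * R)) * hμ
    + (√½ ^ (n + 2) * yVec s (x a) * (-1) ^ k.choose 2 * R) * hphase
    - (yVec s (x a) * √½ ^ (n + 2) * R * (1 + yBraPhase s * (-1) ^ k)) * hC

theorem exists_projDir_yVec_graphState (a : V) (s : Bool) (f : Bool → ℂ)
    (hf : f true * f false = 1) (hsq : f true ^ 2 = -yBraPhase s) :
    ∃ c : ℂ, ‖c‖ = 1 ∧ projDir a (yVec s) (graphState G) =
      (c * √½) • tensorQubit a (yVec s)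
          (diagProd (univ.filter fun b : {v // v ≠ a} => G.Adj a b) f
            (graphState (inducedSub (localComp G a) (· ≠ a)))) := by
  have hμ : ‖f true‖ = 1 := by
    have h := congrArg norm hsq
    rw [norm_pow, norm_neg, norm_yBraPhase] at h
    exact (pow_eq_one_iff_of_nonneg (norm_nonneg _) two_ne_zero).mp h
  refine ⟨√½ * (1 + yBraPhase s) * f true ^ #(G.neighborFinset a), ?_,
    projDir_yVec_graphState G a s f hf hsq⟩
  rw [norm_mul, norm_mul, norm_pow, hμ, one_pow, mul_one, norm_one_add_yBraPhase, norm_inv,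
    norm_real, Real.norm_of_nonneg (Real.sqrt_nonneg 2)]
  exact inv_mul_cancel₀ (by positivity)

end

/-- Projecting qubit `a` of a graph state onto the Pauli-`Y` eigenbasis:
up to a phase, `P_{Y,±}^{(a)} |G⟩ = (1/√2) |Y,±⟩^{(a)} ⊗ U_{a,Y,±} |τ_a(G) − a⟩`, where
`U_{a,Y,+} = ⨂_{b∈N_a} √(−iZ)^{(b)}`, `U_{a,Y,−} = ⨂_{b∈N_a} √(+iZ)^{(b)}` and
`√(±iZ) = diag(e^{±iπ/4}, e^{∓iπ/4})`. -/
theorem stmt3 {V : Type*} [Fintype V] [DecidableEq V]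
    (G : SimpleGraph V) [DecidableRel G.Adj] (a : V) :
    ∃ cp cm : ℂ, ‖cp‖ = 1 ∧ ‖cm‖ = 1 ∧
      projDir a (yVec false) (graphState G) =
        (cp * ((Real.sqrt 2 : ℝ) : ℂ)⁻¹) •
          tensorQubit a (yVec false)
            (diagProd (Finset.univ.filter (fun b : {v : V // v ≠ a} => G.Adj a b.1))
              (fun c => if c then Complex.exp (Complex.I * (Real.pi : ℂ) / 4)
                else Complex.exp (-(Complex.I * (Real.pi : ℂ) / 4)))
              (graphState (inducedSub (localComp G a) (· ≠ a)))) ∧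
      projDir a (yVec true) (graphState G) =
        (cm * ((Real.sqrt 2 : ℝ) : ℂ)⁻¹) •
          tensorQubit a (yVec true)
            (diagProd (Finset.univ.filter (fun b : {v : V // v ≠ a} => G.Adj a b.1))
              (fun c => if c then Complex.exp (-(Complex.I * (Real.pi : ℂ) / 4))
                else Complex.exp (Complex.I * (Real.pi : ℂ) / 4))
              (graphState (inducedSub (localComp G a) (· ≠ a)))) := by
  have hprod : exp (I * Real.pi / 4) * exp (-(I * Real.pi / 4)) = 1 := by
    rw [← exp_add, add_neg_cancel, exp_zero]
  have hsq_neg : exp (-(I * Real.pi / 4)) ^ 2 = -I := by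
    rw [exp_neg, inv_pow, exp_I_pi_div_four_sq, inv_I]
  obtain ⟨cp, hcp, hp⟩ := exists_projDir_yVec_graphState G a false
    (fun c => if c then exp (I * Real.pi / 4) else exp (-(I * Real.pi / 4))) hprod
    (by simpa [yBraPhase] using exp_I_pi_div_four_sq)
  obtain ⟨cm, hcm, hm⟩ := exists_projDir_yVec_graphState G a true
    (fun c => if c then exp (-(I * Real.pi / 4)) else exp (I * Real.pi / 4))
    ((mul_comm _ _).trans hprod) (by simpa [yBraPhase] using hsq_neg)
  exact ⟨cp, cm, hcp, hcm, hp, hm⟩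
end

section
/- Let G = (V,E) be a finite simple graph and a ∈ V. Then the partial trace of the graph-state projector over qubit a satisfies Tr_a ( |G⟩⟨G| ) = ½ |G−a⟩⟨G−a| + ½ U |G−a⟩⟨G−a| U†, where U = ⨂_{b∈N_a} Z^{(b)} and |G−a⟩ is the graph state of the vertex-deleted graph G−a on the qubits V∖{a}. -/
open scoped BigOperators

/-!
Split off the qubit `a`. The controlled-`Z` gates on the edges at `a` act as the identity when
qubit `a` is `|0⟩` and as `U = ⨂_{b∈N_a} Z^{(b)}` when it is `|1⟩`, so
`|G⟩ = (|0⟩ ⊗ |G−a⟩ + |1⟩ ⊗ U|G−a⟩) / √2`. Tracing out `a` removes the cross terms between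
the two orthogonal branches and leaves each with weight `1/2`.
-/

namespace GraphState

open Finset

variable {V : Type*}

theorem edgeSign_map {W : Type*} (f : V → W) (x : W → Bool) (e : Sym2 V) :
    edgeSign x (e.map f) = edgeSign (x ∘ f) e := by
  induction e using Sym2.ind with
  | _ u v => rfl

variable [Fintype V] [DecidableEq V]

theorem card_subtype_ne_add_one (a : V) :
    Fintype.card {v : V // v ≠ a} + 1 = Fintype.card V := by
  rw [← Fintype.card_option, Fintype.card_congr (Equiv.optionSubtypeNe a)]

theorem ptraceKeep_ne_outer (a : V) (ψ φ : QState V) (x y : {v : V // v ≠ a} → Bool) :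
    ptraceKeep (· ≠ a) (outer ψ φ) x y =
      ∑ b : Bool, ψ ((Equiv.funSplitAt a Bool).symm (b, x)) *
        starRingEnd ℂ (φ ((Equiv.funSplitAt a Bool).symm (b, y))) := by
  let _ : Unique {v : V // ¬ v ≠ a} :=
    ⟨⟨⟨a, not_not.mpr rfl⟩⟩, fun v => Subtype.ext (not_not.mp v.2)⟩
  refine Finset.sum_equiv (Equiv.funUnique _ Bool) (by simp) fun z _ => ?_
  have hglue (t : {v : V // v ≠ a} → Bool) :
      (fun w => if h : w ≠ a then t ⟨w, h⟩ else z ⟨w, h⟩) =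
        (Equiv.funSplitAt a Bool).symm (z default, t) := by
    funext w
    by_cases h : w = a
    · subst h; simp [Unique.eq_default]
    · simp [h]
  simp only [outer, hglue, Equiv.funUnique_apply]

section Edges

variable (G : SimpleGraph V) [DecidableRel G.Adj]

section Product

variable {M : Type*} [CommMonoid M] (f : Sym2 V → M)

theorem prod_edgeFinset_filter_mem (a : V) :
    ∏ e ∈ G.edgeFinset with a ∈ e, f e =
      ∏ b ∈ univ.filter (fun b : {v : V // v ≠ a} => G.Adj a b.1), f s(a, b.1) := by
  symm
  refine prod_nbij (fun b => s(a, b.1)) ?_ ?_ ?_ (fun _ _ => rfl)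
  · intro b hb
    simp_all
  · intro b₁ _ b₂ _ h
    exact Subtype.ext (Sym2.congr_right.mp h)
  · intro e he
    simp only [coe_filter, SimpleGraph.mem_edgeFinset, Set.mem_ofPred_eq] at he
    obtain ⟨hadj, ha⟩ := he
    induction e using Sym2.ind with
    | _ u v =>
      rcases Sym2.mem_iff.mp ha with rfl | rfl
      · exact ⟨⟨v, hadj.ne'⟩, by simpa using hadj, rfl⟩
      · exact ⟨⟨u, hadj.ne⟩, by simpa using hadj.symm, Sym2.eq_swap⟩

theorem prod_edgeFinset_inducedSub (P : V → Prop) [DecidablePred P] :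
    ∏ e ∈ (inducedSub G P).edgeFinset, f (e.map Subtype.val) =
      ∏ e ∈ G.edgeFinset with ∀ v ∈ e, P v, f e := by
  refine prod_nbij (Sym2.map Subtype.val) ?_ ?_ ?_ (fun _ _ => rfl)
  · intro e he
    induction e using Sym2.ind with
    | _ u v =>
      have hadj : G.Adj u v := SimpleGraph.mem_edgeFinset.mp he
      simpa [u.2, v.2] using hadj
  · intro e₁ _ e₂ _ h
    exact Sym2.map.injective Subtype.val_injective h
  · intro e he
    simp only [coe_filter, SimpleGraph.mem_edgeFinset, Set.mem_ofPred_eq] at he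
    obtain ⟨hadj, hP⟩ := he
    induction e using Sym2.ind with
    | _ u v =>
      refine ⟨s(⟨u, hP u (Sym2.mem_mk_left u v)⟩, ⟨v, hP v (Sym2.mem_mk_right u v)⟩), ?_, rfl⟩
      rw [mem_coe, SimpleGraph.mem_edgeFinset]
      exact hadj

theorem prod_edgeFinset_eq_mul (a : V) :
    ∏ e ∈ G.edgeFinset, f e =
      (∏ b ∈ univ.filter (fun b : {v : V // v ≠ a} => G.Adj a b.1), f s(a, b.1)) *
        ∏ e ∈ (inducedSub G (· ≠ a)).edgeFinset, f (e.map Subtype.val) := by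
  classical
  rw [← prod_filter_mul_prod_filter_not G.edgeFinset (a ∈ ·), prod_edgeFinset_filter_mem,
    prod_edgeFinset_inducedSub]
  congr 1
  refine prod_congr (filter_congr fun e _ => ?_) fun _ _ => rfl
  exact ⟨fun h v hv hva => h (hva ▸ hv), fun h ha => h a ha rfl⟩

end Product

theorem graphState_funSplitAt_symm (a : V) (b : Bool) (t : {v : V // v ≠ a} → Bool) :
    graphState G ((Equiv.funSplitAt a Bool).symm (b, t)) =
      ((Real.sqrt 2 : ℝ) : ℂ)⁻¹ *
        if b then
          pauliZProd (univ.filter (fun c : {v : V // v ≠ a} => G.Adj a c.1))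
            (graphState (inducedSub G (· ≠ a))) t
        else graphState (inducedSub G (· ≠ a)) t := by
  set x := (Equiv.funSplitAt a Bool).symm (b, t)
  have hxa : x a = b := by simp [x]
  have hxt : x ∘ Subtype.val = t := funext fun u => by simp [x, u.2]
  have hsign (c : {v : V // v ≠ a}) :
      edgeSign x s(a, c.1) = if b && t c then -1 else 1 := by
    rw [← hxa, ← hxt]; rfl
  simp only [graphState, pauliZProd]
  rw [← card_subtype_ne_add_one a, prod_edgeFinset_eq_mul G _ a]
  simp only [edgeSign_map, hxt, hsign]
  cases b <;> simp only [Bool.false_and, Bool.true_and, Bool.false_eq_true, if_false,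
    if_true, prod_const_one] <;> ring

end Edges

end GraphState

/-- Tracing out qubit `a` of a graph state:
`Tr_a(|G⟩⟨G|) = ½ |G−a⟩⟨G−a| + ½ U |G−a⟩⟨G−a| U†` with `U = ⨂_{b∈N_a} Z^{(b)}`. -/
theorem stmt10 {V : Type*} [Fintype V] [DecidableEq V]
    (G : SimpleGraph V) [DecidableRel G.Adj] (a : V) :
    ptraceKeep (· ≠ a) (outer (graphState G) (graphState G)) =
      (2 : ℂ)⁻¹ • outer (graphState (inducedSub G (· ≠ a)))
          (graphState (inducedSub G (· ≠ a))) +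
        (2 : ℂ)⁻¹ • outer
          (pauliZProd (Finset.univ.filter (fun b : {v : V // v ≠ a} => G.Adj a b.1))
            (graphState (inducedSub G (· ≠ a))))
          (pauliZProd (Finset.univ.filter (fun b : {v : V // v ≠ a} => G.Adj a b.1))
            (graphState (inducedSub G (· ≠ a)))) := by
  funext x y
  have hsqrt : ((Real.sqrt 2 : ℝ) : ℂ)⁻¹ * ((Real.sqrt 2 : ℝ) : ℂ)⁻¹ = 2⁻¹ := by
    rw [← mul_inv, ← Complex.ofReal_mul, Real.mul_self_sqrt zero_le_two, Complex.ofReal_ofNat]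
  simp only [GraphState.ptraceKeep_ne_outer, Fintype.sum_bool,
    GraphState.graphState_funSplitAt_symm, if_true, Bool.false_eq_true, if_false, map_mul,
    map_inv₀, Complex.conj_ofReal, outer, Pi.add_apply, Pi.smul_apply, smul_eq_mul]
  set ψ := graphState (inducedSub G (· ≠ a))
  set Uψ := pauliZProd (Finset.univ.filter (fun b : {v : V // v ≠ a} => G.Adj a b.1)) ψ
  linear_combination (ψ x * starRingEnd ℂ (ψ y) + Uψ x * starRingEnd ℂ (Uψ y)) * hsqrt
end
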